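/- arXiv:2206.13998 — 6 statements merged into one kernel-verified Lean document; each statement's English description precedes it below -/
import Mathlib

section
/- Let G be a subgroup of the symmetric group on Fin n, and let C be a symmetric real n×n matrix. If ⟨C, Vᵀ V⟩ = ⟨C, (V P_{g⁻¹})ᵀ (V P_{g⁻¹})⟩ holds for all V in ℝ^{n×n} (i.e. with k = n) and all g in G, then C * P_g = P_g * C for all g in G. -/
open Matrix
open scoped Kronecker
open scoped Classical

noncomputable section

def permMat {m : ℕ} (g : Equiv.Perm (Fin m)) : Matrix (Fin m) (Fin m) ℝ :=
  Matrix.of fun i j => if i = g j then (1 : ℝ) else 0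

def frobInner {α β : Type*} [Fintype α] [Fintype β] (A B : Matrix α β ℝ) : ℝ :=
  Matrix.trace (Aᵀ * B)

def indMat {α β : Type*} (R : Set α) (S : Set β) : Matrix α β ℝ :=
  Matrix.of fun i j => if i ∈ R ∧ j ∈ S then (1 : ℝ) else 0

def diagInd {α : Type*} (O : Set α) : Matrix α α ℝ :=
  Matrix.of fun i j => if i = j ∧ i ∈ O then (1 : ℝ) else 0

def orbitOf {m : ℕ} (G : Subgroup (Equiv.Perm (Fin m))) (i : Fin m) : Set (Fin m) :=
  {j | ∃ g ∈ G, g i = j}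

def commutant {α : Type*} [Fintype α] [DecidableEq α] (S : Set (Matrix α α ℝ)) :
    Submodule ℝ (Matrix α α ℝ) where
  carrier := {M | ∀ Q ∈ S, M * Q = Q * M}
  add_mem' := by
    intro a b ha hb Q hQ
    rw [Matrix.add_mul, Matrix.mul_add, ha Q hQ, hb Q hQ]
  zero_mem' := by intro Q hQ; simp
  smul_mem' := by
    intro c M hM Q hQ
    rw [Matrix.smul_mul, Matrix.mul_smul, hM Q hQ]

def fixedSpace {α : Type*} [Fintype α] (S : Set (Matrix α α ℝ)) : Submodule ℝ (α → ℝ) where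
  carrier := {v | ∀ Q ∈ S, Q.mulVec v = v}
  add_mem' := by
    intro a b ha hb Q hQ
    rw [Matrix.mulVec_add, ha Q hQ, hb Q hQ]
  zero_mem' := by intro Q hQ; simp
  smul_mem' := by
    intro c v hv Q hQ
    rw [Matrix.mulVec_smul, hv Q hQ]

def oplus {p q : ℕ} (A : Matrix (Fin p) (Fin p) ℝ) (B : Matrix (Fin q) (Fin q) ℝ) :
    Matrix (Fin (p + q)) (Fin (p + q)) ℝ :=
  Matrix.reindex finSumFinEquiv finSumFinEquiv (Matrix.fromBlocks A 0 0 B)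

def wr {p q : ℕ} (h : Fin p → Equiv.Perm (Fin q)) (g : Equiv.Perm (Fin p)) :
    Matrix (Fin p × Fin q) (Fin p × Fin q) ℝ :=
  Matrix.of fun x y => if x.1 = g y.1 ∧ x.2 = h x.1 y.2 then (1 : ℝ) else 0

def IsBasisOfSet {N : Type*} [AddCommGroup N] [Module ℝ N] (s : Set N)
    (W : Submodule ℝ N) : Prop :=
  LinearIndependent ℝ (fun x : s => (x : N)) ∧ Submodule.span ℝ s = W

def vecCol {m : ℕ} (X : Matrix (Fin m) (Fin m) ℝ) : Fin m × Fin m → ℝ :=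
  fun x => X x.2 x.1

def rearrange {p q : ℕ} (M : Matrix (Fin p × Fin q) (Fin p × Fin q) ℝ) :
    Matrix (Fin p × Fin p) (Fin q × Fin q) ℝ :=
  Matrix.of fun x y => M (x.2, y.2) (x.1, y.1)

def frob {α β : Type*} [Fintype α] [Fintype β] (A : Matrix α β ℝ) : ℝ :=
  Real.sqrt (∑ i, ∑ j, (A i j) ^ 2)

def l2norm {k : ℕ} (v : Fin k → ℝ) : ℝ := Real.sqrt (∑ r, v r ^ 2)



lemma myPermMat_transpose {m : ℕ} (g : Equiv.Perm (Fin m)) :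
    (permMat g)ᵀ = permMat g⁻¹ := by
  ext i j
  simp only [permMat, Matrix.transpose_apply, Matrix.of_apply]
  have : (j = g i) ↔ (i = g⁻¹ j) := by
    rw [Equiv.Perm.inv_def, Equiv.eq_symm_apply, eq_comm]
  simp [this]

lemma myPermMat_mul {m : ℕ} (g h : Equiv.Perm (Fin m)) :
    permMat g * permMat h = permMat (g * h) := by
  ext i j
  simp [permMat, Matrix.mul_apply, Finset.sum_ite_eq, Equiv.Perm.mul_apply]
  split_ifs <;> simp_all

lemma myPermMat_one {m : ℕ} : permMat (1 : Equiv.Perm (Fin m)) = 1 := by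
  ext i j
  simp [permMat, Matrix.one_apply]
  split_ifs <;> simp_all

/-- If `⟨C, Vᵀ V⟩ = ⟨C, (V P_{g⁻¹})ᵀ (V P_{g⁻¹})⟩` for all `V ∈ ℝ^{n×n}`
and all `g ∈ G`, then the symmetric matrix `C` commutes with all `P_g`, `g ∈ G`. -/
theorem equivariance_of_objective_invariance {n : ℕ}
    (G : Subgroup (Equiv.Perm (Fin n)))
    (C : Matrix (Fin n) (Fin n) ℝ) (hsymm : C.IsSymm)
    (hinv : ∀ (V : Matrix (Fin n) (Fin n) ℝ), ∀ g ∈ G,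
      frobInner C (Vᵀ * V) =
        frobInner C ((V * permMat g⁻¹)ᵀ * (V * permMat g⁻¹))) :
    ∀ g ∈ G, C * permMat g = permMat g * C := by
  intro g hg
  set P := permMat g with hP
  have hPtP : Pᵀ * P = 1 := by rw [myPermMat_transpose, myPermMat_mul, inv_mul_cancel, myPermMat_one]
  have hPPt : P * Pᵀ = 1 := by rw [myPermMat_transpose, myPermMat_mul, mul_inv_cancel, myPermMat_one]
  set D : Matrix (Fin n) (Fin n) ℝ := C - Pᵀ * C * P with hD
  have hDsymm : Dᵀ = D := by
    rw [hD]
    simp [transpose_sub, transpose_mul, Matrix.mul_assoc, hsymm.eq]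
  -- trace (D * (Vᵀ * V)) = 0 for all V
  have hDtr : ∀ V : Matrix (Fin n) (Fin n) ℝ, trace (D * (Vᵀ * V)) = 0 := by
    intro V
    have h := hinv V g hg
    unfold frobInner at h
    rw [hsymm.eq] at h
    have hQ : permMat g⁻¹ = Pᵀ := (myPermMat_transpose g).symm
    rw [hQ, transpose_mul, transpose_transpose] at h
    -- h : trace (C * (Vᵀ * V)) = trace (C * (P * Vᵀ * (V * Pᵀ)))
    have h2 : trace (C * (P * Vᵀ * (V * Pᵀ))) = trace ((Pᵀ * C * P) * (Vᵀ * V)) := by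
      rw [show C * (P * Vᵀ * (V * Pᵀ)) = (C * P * Vᵀ * V) * Pᵀ by
            simp [Matrix.mul_assoc],
          Matrix.trace_mul_comm]
      simp [Matrix.mul_assoc]
    rw [h2] at h
    rw [hD, Matrix.sub_mul, trace_sub, h, sub_self]
  -- quadratic form vanishes
  have outer : ∀ u : Fin n → ℝ,
      (vecMulVec u u)ᵀ * vecMulVec u u = (∑ r, u r * u r) • vecMulVec u u := by
    intro u; ext i j
    simp only [Matrix.mul_apply, transpose_apply, vecMulVec_apply, Matrix.smul_apply,
      smul_eq_mul, Finset.sum_mul]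
    exact Finset.sum_congr rfl fun r _ => by ring
  have qform : ∀ u : Fin n → ℝ,
      (∑ r, u r * u r) * (∑ j, ∑ k, D j k * (u k * u j)) = 0 := by
    intro u
    have h := hDtr (vecMulVec u u)
    rw [outer, Matrix.mul_smul, trace_smul, smul_eq_mul] at h
    convert h using 2
    simp only [Matrix.trace, Matrix.diag_apply, Matrix.mul_apply, vecMulVec_apply]
  have hdiag : ∀ i, D i i = 0 := by
    intro i
    have h := qform (Pi.single i 1)
    simpa [Pi.single_apply, Finset.sum_ite_eq', mul_ite, ite_mul] using h
  have hoff : ∀ i j, D i j = 0 := by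
    intro i j
    by_cases hij : i = j
    · subst hij; exact hdiag i
    · have h := qform (Pi.single i 1 + Pi.single j 1)
      simp only [Pi.add_apply, Pi.single_apply] at h
      have hsum1 : (∑ r, ((if r = i then (1:ℝ) else 0) + if r = j then 1 else 0) *
          ((if r = i then (1:ℝ) else 0) + if r = j then 1 else 0)) = 2 := by
        have : ∀ r : Fin n, ((if r = i then (1:ℝ) else 0) + if r = j then 1 else 0) *
            ((if r = i then (1:ℝ) else 0) + if r = j then 1 else 0)
            = (if r = i then 1 else 0) + (if r = j then 1 else 0) := by
          intro r
          by_cases h1 : r = i <;> by_cases h2 : r = j <;> simp_all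
        rw [Finset.sum_congr rfl fun r _ => this r, Finset.sum_add_distrib]
        simp [Finset.sum_ite_eq']
        norm_num
      rw [hsum1] at h
      have h2 : (∑ a, ∑ b, D a b *
          (((if b = i then (1:ℝ) else 0) + if b = j then 1 else 0) *
           ((if a = i then (1:ℝ) else 0) + if a = j then 1 else 0)))
          = D i i + D j i + D i j + D j j := by
        simp [add_mul, mul_add, Finset.mul_sum, Finset.sum_add_distrib, mul_ite, ite_mul,
          Finset.sum_ite_eq, Finset.sum_ite_eq']
        ring
      rw [h2] at h
      have hji' : D j i = D i j := by
        have := congrFun (congrFun hDsymm j) i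
        simpa [Matrix.transpose_apply] using this.symm
      rw [hdiag i, hdiag j, hji'] at h
      linarith
  have hDzero : D = 0 := by ext i j; exact hoff i j
  have hC : C = Pᵀ * C * P := by
    have := sub_eq_zero.mp (hD ▸ hDzero)
    exact this
  calc C * P = (P * Pᵀ) * (C * P) := by rw [hPPt, Matrix.one_mul]
    _ = P * (Pᵀ * C * P) := by simp [Matrix.mul_assoc]
    _ = P * C := by rw [← hC]
end
end

section
/- Let G be a finite subgroup of the symmetric group on Fin n, and let E(G) = {M ∈ ℝ^{n×n} : M P_g = P_g M for all g ∈ G}. Then |G| · dim E(G) = Σ_{g∈G} trace(P_g)²; equivalently, the dimension of the commutant E(G) equals the average over g ∈ G of the square of the number of fixed points of g. -/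
open Matrix
open scoped Kronecker
open scoped Classical

noncomputable section

namespace Aux

variable {n : ℕ} (G : Subgroup (Equiv.Perm (Fin n)))

lemma mul_permMat (M : Matrix (Fin n) (Fin n) ℝ) (g : Equiv.Perm (Fin n)) (i j : Fin n) :
    (M * permMat g) i j = M i (g j) := by
  simp [Matrix.mul_apply, permMat]

lemma permMat_mul (M : Matrix (Fin n) (Fin n) ℝ) (g : Equiv.Perm (Fin n)) (i j : Fin n) :
    (permMat g * M) i j = M (g⁻¹ i) j := by
  simp only [Matrix.mul_apply, permMat, Matrix.of_apply, ite_mul, one_mul, zero_mul]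
  rw [Finset.sum_eq_single (g⁻¹ i)]
  · simp
  · intro k _ hk
    rw [if_neg]
    intro h
    exact hk (by simp [h])
  · simp

lemma mem_commutant_iff (M : Matrix (Fin n) (Fin n) ℝ) :
    M ∈ commutant {Q | ∃ g ∈ G, Q = permMat g} ↔
      ∀ g ∈ G, ∀ i j, M (g i) (g j) = M i j := by
  constructor
  · intro hM g hg i j
    have h := hM (permMat g) ⟨g, hg, rfl⟩
    have := congrFun (congrFun h (g i)) j
    rw [mul_permMat, permMat_mul] at this
    simpa using this
  · intro h Q hQ
    obtain ⟨g, hg, rfl⟩ := hQ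
    ext i j
    rw [mul_permMat, permMat_mul]
    have := h g hg (g⁻¹ i) j
    simpa using this

abbrev Ω := Quotient (MulAction.orbitRel G (Fin n × Fin n))

/-- The linear map from functions on orbits to the commutant. -/
def ψ : (Ω G → ℝ) →ₗ[ℝ] ↥(commutant {Q | ∃ g ∈ G, Q = permMat g}) where
  toFun f := ⟨Matrix.of fun i j => f ⟦(i, j)⟧, by
    rw [mem_commutant_iff]
    intro g hg i j
    show f ⟦(g i, g j)⟧ = f ⟦(i, j)⟧
    congr 1
    apply Quotient.sound
    exact ⟨⟨g, hg⟩, rfl⟩⟩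
  map_add' f g := by ext i j; rfl
  map_smul' c f := by ext i j; rfl

lemma ψ_bijective : Function.Bijective (ψ G) := by
  constructor
  · intro f₁ f₂ h
    funext q
    obtain ⟨⟨i, j⟩, rfl⟩ := Quotient.exists_rep q
    have h' := congrArg Subtype.val h
    exact congrFun (congrFun h' i) j
  · rintro ⟨M, hM⟩
    rw [mem_commutant_iff] at hM
    refine ⟨fun q => M q.out.1 q.out.2, ?_⟩
    ext i j
    show M (⟦(i, j)⟧ : Ω G).out.1 (⟦(i, j)⟧ : Ω G).out.2 = M i j
    have hrel : (⟦(i, j)⟧ : Ω G).out ∈ MulAction.orbit G (i, j) := by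
      have h0 := Quotient.mk_out (s := MulAction.orbitRel G (Fin n × Fin n)) (i, j)
      rwa [MulAction.orbitRel_apply] at h0
    obtain ⟨g, hgp⟩ := hrel
    have h1 : (g : Equiv.Perm (Fin n)) (i, j).1 = (⟦(i, j)⟧ : Ω G).out.1 := congrArg Prod.fst hgp
    have h2 : (g : Equiv.Perm (Fin n)) (i, j).2 = (⟦(i, j)⟧ : Ω G).out.2 := congrArg Prod.snd hgp
    rw [← h1, ← h2]
    exact hM g g.2 i j

lemma finrank_commutant :
    Module.finrank ℝ (commutant {Q | ∃ g ∈ G, Q = permMat g}) = Fintype.card (Ω G) := by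
  rw [← (LinearEquiv.ofBijective (ψ G) (ψ_bijective G)).finrank_eq]
  simp [Module.finrank_fintype_fun_eq_card]

lemma trace_permMat (g : Equiv.Perm (Fin n)) :
    Matrix.trace (permMat g) = ∑ i : Fin n, if i = g i then (1 : ℝ) else 0 := by
  simp [Matrix.trace, Matrix.diag, permMat]

lemma card_fixedBy (g : G) :
    (Fintype.card (MulAction.fixedBy (Fin n × Fin n) g) : ℝ) =
      (Matrix.trace (permMat (g : Equiv.Perm (Fin n)))) ^ 2 := by
  rw [trace_permMat, sq, Finset.sum_mul_sum, ← Finset.sum_product',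
    Finset.univ_product_univ, Fintype.card_subtype, Finset.card_filter]
  push_cast
  apply Finset.sum_congr rfl
  rintro ⟨i, j⟩ -
  have hmem : ((i, j) ∈ MulAction.fixedBy (Fin n × Fin n) g) ↔
      (i = (g : Equiv.Perm (Fin n)) i ∧ j = (g : Equiv.Perm (Fin n)) j) := by
    rw [MulAction.mem_fixedBy]
    exact ⟨fun h => ⟨(congrArg Prod.fst h).symm, (congrArg Prod.snd h).symm⟩,
      fun h => Prod.ext h.1.symm h.2.symm⟩
  simp only [hmem]
  by_cases h1 : i = (g : Equiv.Perm (Fin n)) i <;>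
    by_cases h2 : j = (g : Equiv.Perm (Fin n)) j
  · rw [if_pos ⟨h1, h2⟩, if_pos h1, if_pos h2, mul_one]
  · rw [if_neg (fun h => h2 h.2), if_neg h2, mul_zero]
  · rw [if_neg (fun h => h1 h.1), if_neg h1, zero_mul]
  · rw [if_neg (fun h => h1 h.1), if_neg h1, zero_mul]

end Aux

/-- `|G| · dim E(G) = Σ_{g∈G} trace(P_g)²`. -/
theorem commutant_dim_eq_sum_sq_trace {n : ℕ} (G : Subgroup (Equiv.Perm (Fin n))) :
    (Nat.card G : ℝ) *
        (Module.finrank ℝ (commutant {Q | ∃ g ∈ G, Q = permMat g}) : ℝ) =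
      ∑ g : G, (Matrix.trace (permMat (g : Equiv.Perm (Fin n)))) ^ 2 := by
  have burn := MulAction.sum_card_fixedBy_eq_card_orbits_mul_card_group G (Fin n × Fin n)
  rw [Aux.finrank_commutant]
  calc (Nat.card G : ℝ) * (Fintype.card (Aux.Ω G) : ℝ)
      = ((Fintype.card (Aux.Ω G) * Fintype.card G : ℕ) : ℝ) := by
        rw [Nat.card_eq_fintype_card]; push_cast; ring
    _ = ((∑ g : G, Fintype.card (MulAction.fixedBy (Fin n × Fin n) g) : ℕ) : ℝ) := by rw [burn]
    _ = ∑ g : G, (Matrix.trace (permMat (g : Equiv.Perm (Fin n)))) ^ 2 := by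
        push_cast
        exact Finset.sum_congr rfl fun g _ => Aux.card_fixedBy G g
end
end

section
/- Let G be a finite subgroup of the symmetric group on Fin p and H a finite subgroup of the symmetric group on Fin q. Let E(G⊕H) = {M ∈ ℝ^{(p+q)×(p+q)} : M (P_g ⊕ P_h) = (P_g ⊕ P_h) M for all g ∈ G, h ∈ H}. Then dim E(G⊕H) = dim E(G) + dim E(H) + 2 · |O(G)| · |O(H)|, where |O(G)| and |O(H)| are the numbers of orbits of G on Fin p and of H on Fin q, and E(G), E(H) are the commutants {M ∈ ℝ^{p×p} : M P_g = P_g M for all g ∈ G} and {M ∈ ℝ^{q×q} : M P_h = P_h M for all h ∈ H}. -/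
open Matrix
open scoped Kronecker
open scoped Classical

noncomputable section

section Aux

open Matrix

/-- Entry formula for left multiplication by a permutation matrix. -/
lemma permMat_mul_apply {m n : ℕ} (g : Equiv.Perm (Fin m)) (B : Matrix (Fin m) (Fin n) ℝ)
    (i : Fin m) (j : Fin n) : (permMat g * B) i j = B (g⁻¹ i) j := by
  rw [Matrix.mul_apply, Finset.sum_eq_single (g⁻¹ i)]
  · simp [permMat]
  · intro k _ hk
    have : i ≠ g k := by
      intro h
      apply hk
      simp [h]
    simp [permMat, this]
  · simp

/-- Entry formula for right multiplication by a permutation matrix. -/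
lemma mul_permMat_apply {m n : ℕ} (h : Equiv.Perm (Fin n)) (B : Matrix (Fin m) (Fin n) ℝ)
    (i : Fin m) (j : Fin n) : (B * permMat h) i j = B i (h j) := by
  rw [Matrix.mul_apply, Finset.sum_eq_single (h j)]
  · simp [permMat]
  · intro k _ hk; simp [permMat, hk]
  · simp

lemma orbitOf_apply_eq {m : ℕ} {G : Subgroup (Equiv.Perm (Fin m))} {g : Equiv.Perm (Fin m)}
    (hg : g ∈ G) (i : Fin m) : orbitOf G (g i) = orbitOf G i := by
  ext j
  constructor
  · rintro ⟨g', hg', rfl⟩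
    exact ⟨g' * g, mul_mem hg' hg, rfl⟩
  · rintro ⟨g', hg', rfl⟩
    refine ⟨g' * g⁻¹, mul_mem hg' (inv_mem hg), ?_⟩
    simp [Equiv.Perm.mul_apply]

lemma exists_of_orbitOf_eq {m : ℕ} {G : Subgroup (Equiv.Perm (Fin m))} {i i' : Fin m}
    (h : orbitOf G i = orbitOf G i') : ∃ g ∈ G, g i = i' := by
  have : i' ∈ orbitOf G i := by
    rw [h]
    exact ⟨1, one_mem G, rfl⟩
  exact this

/-- The subspace of functions constant on fibers of `f`. -/
def invSub {α β : Type*} [Fintype α] (f : α → β) : Submodule ℝ (α → ℝ) where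
  carrier := {v | ∀ i j, f i = f j → v i = v j}
  add_mem' := by intro a b ha hb i j hij; simp [ha i j hij, hb i j hij]
  zero_mem' := by intro i j _; rfl
  smul_mem' := by intro c v hv i j hij; simp [hv i j hij]

noncomputable def invSubEquiv {α β : Type*} [Fintype α] (f : α → β) :
    (↥(Set.range f) → ℝ) ≃ₗ[ℝ] ↥(invSub f) where
  toFun w := ⟨fun i => w ⟨f i, ⟨i, rfl⟩⟩, fun i j hij => congrArg w (Subtype.ext hij)⟩
  map_add' w₁ w₂ := rfl
  map_smul' c w := rfl
  invFun v := fun y => v.1 y.2.choose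
  left_inv w := by
    funext y
    show w _ = w y
    congr 1
    exact Subtype.ext y.2.choose_spec
  right_inv v := by
    apply Subtype.ext
    funext i
    exact v.2 _ i (⟨f i, ⟨i, rfl⟩⟩ : Set.range f).2.choose_spec

lemma finrank_invSub {α β : Type*} [Fintype α] (f : α → β) :
    Module.finrank ℝ ↥(invSub f) = (Set.range f).ncard := by
  classical
  rw [← (invSubEquiv f).finrank_eq, Module.finrank_pi,
    Set.ncard_eq_toFinset_card', Set.toFinset_card]

lemma ncard_prod' {α β : Type*} (s : Set α) (t : Set β) :
    (s ×ˢ t).ncard = s.ncard * t.ncard := by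
  have h := Nat.card_congr (Equiv.Set.prod s t)
  simpa [Nat.card_prod, Nat.card_coe_set_eq] using h

/-- The space of matrices intertwining the two permutation actions. -/
def interSpace {p q : ℕ} (G : Subgroup (Equiv.Perm (Fin p))) (H : Subgroup (Equiv.Perm (Fin q))) :
    Submodule ℝ (Matrix (Fin p) (Fin q) ℝ) where
  carrier := {B | ∀ g ∈ G, ∀ h ∈ H, permMat g * B = B * permMat h}
  add_mem' := by
    intro a b ha hb g hg h hh
    rw [Matrix.mul_add, Matrix.add_mul, ha g hg h hh, hb g hg h hh]
  zero_mem' := by intro g hg h hh; simp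
  smul_mem' := by
    intro c M hM g hg h hh
    rw [Matrix.mul_smul, Matrix.smul_mul, hM g hg h hh]

lemma mem_interSpace_iff {p q : ℕ} {G : Subgroup (Equiv.Perm (Fin p))}
    {H : Subgroup (Equiv.Perm (Fin q))} (B : Matrix (Fin p) (Fin q) ℝ) :
    B ∈ interSpace G H ↔ ∀ x y : Fin p × Fin q,
      (fun z : Fin p × Fin q => (orbitOf G z.1, orbitOf H z.2)) x =
        (fun z : Fin p × Fin q => (orbitOf G z.1, orbitOf H z.2)) y →
      B x.1 x.2 = B y.1 y.2 := by
  constructor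
  · intro hB x y hxy
    simp only [Prod.mk.injEq] at hxy
    obtain ⟨g, hg, hgx⟩ := exists_of_orbitOf_eq hxy.1
    obtain ⟨h, hh, hhx⟩ := exists_of_orbitOf_eq hxy.2
    have := congrFun (congrFun (hB g hg h hh) (g x.1)) x.2
    rw [permMat_mul_apply, mul_permMat_apply] at this
    simp at this
    rw [this, hgx, hhx]
  · intro hB g hg h hh
    ext i j
    rw [permMat_mul_apply, mul_permMat_apply]
    apply hB (g⁻¹ i, j) (i, h j)
    simp only [Prod.mk.injEq]
    exact ⟨orbitOf_apply_eq (inv_mem hg) i, (orbitOf_apply_eq hh j).symm⟩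

noncomputable def interEquiv {p q : ℕ} (G : Subgroup (Equiv.Perm (Fin p)))
    (H : Subgroup (Equiv.Perm (Fin q))) :
    ↥(interSpace G H) ≃ₗ[ℝ]
      ↥(invSub (fun z : Fin p × Fin q => (orbitOf G z.1, orbitOf H z.2))) where
  toFun B := ⟨fun x => B.1 x.1 x.2, (mem_interSpace_iff B.1).1 B.2⟩
  map_add' _ _ := rfl
  map_smul' _ _ := rfl
  invFun v := ⟨Matrix.of fun i j => v.1 (i, j),
    (mem_interSpace_iff _).2 (fun x y h => v.2 x y h)⟩
  left_inv B := rfl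
  right_inv v := rfl

lemma finrank_interSpace {p q : ℕ} (G : Subgroup (Equiv.Perm (Fin p)))
    (H : Subgroup (Equiv.Perm (Fin q))) :
    Module.finrank ℝ ↥(interSpace G H) =
      (Set.range (orbitOf G)).ncard * (Set.range (orbitOf H)).ncard := by
  rw [(interEquiv G H).finrank_eq, finrank_invSub]
  have : Set.range (fun z : Fin p × Fin q => (orbitOf G z.1, orbitOf H z.2)) =
      (Set.range (orbitOf G)) ×ˢ (Set.range (orbitOf H)) := by
    ext ⟨a, b⟩
    constructor
    · rintro ⟨⟨i, j⟩, h⟩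
      obtain ⟨h1, h2⟩ := Prod.mk.injEq .. ▸ h
      exact ⟨⟨i, h1⟩, ⟨j, h2⟩⟩
    · rintro ⟨⟨i, hi⟩, ⟨j, hj⟩⟩
      exact ⟨(i, j), by simp [hi, hj]⟩
  rw [this, ncard_prod']

lemma orbit_set_eq {m : ℕ} (G : Subgroup (Equiv.Perm (Fin m))) :
    {O : Set (Fin m) | ∃ i, O = orbitOf G i} = Set.range (orbitOf G) := by
  ext O
  simp [eq_comm, Set.range]

/-- The block-decomposition linear equivalence. -/
noncomputable def blockEquiv (p q : ℕ) :
    Matrix (Fin (p + q)) (Fin (p + q)) ℝ ≃ₗ[ℝ]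
      Matrix (Fin p) (Fin p) ℝ × Matrix (Fin q) (Fin q) ℝ ×
      Matrix (Fin p) (Fin q) ℝ × Matrix (Fin q) (Fin p) ℝ where
  toFun M := ((M.submatrix finSumFinEquiv finSumFinEquiv).toBlocks₁₁,
    (M.submatrix finSumFinEquiv finSumFinEquiv).toBlocks₂₂,
    (M.submatrix finSumFinEquiv finSumFinEquiv).toBlocks₁₂,
    (M.submatrix finSumFinEquiv finSumFinEquiv).toBlocks₂₁)
  map_add' _ _ := rfl
  map_smul' _ _ := rfl
  invFun x := (Matrix.fromBlocks x.1 x.2.2.1 x.2.2.2 x.2.1).submatrix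
    finSumFinEquiv.symm finSumFinEquiv.symm
  left_inv M := by
    simp [Matrix.fromBlocks_toBlocks, Matrix.submatrix_submatrix]
  right_inv x := by
    obtain ⟨A, D, B, C⟩ := x
    simp [Matrix.submatrix_submatrix, Matrix.toBlocks_fromBlocks₁₁,
      Matrix.toBlocks_fromBlocks₁₂, Matrix.toBlocks_fromBlocks₂₁, Matrix.toBlocks_fromBlocks₂₂]

lemma oplus_comm_iff {p q : ℕ} (N : Matrix (Fin p ⊕ Fin q) (Fin p ⊕ Fin q) ℝ)
    (Pg : Matrix (Fin p) (Fin p) ℝ) (Ph : Matrix (Fin q) (Fin q) ℝ) :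
    N.submatrix ⇑finSumFinEquiv.symm ⇑finSumFinEquiv.symm * oplus Pg Ph =
      oplus Pg Ph * N.submatrix ⇑finSumFinEquiv.symm ⇑finSumFinEquiv.symm ↔
    (N.toBlocks₁₁ * Pg = Pg * N.toBlocks₁₁ ∧ N.toBlocks₁₂ * Ph = Pg * N.toBlocks₁₂ ∧
     N.toBlocks₂₁ * Pg = Ph * N.toBlocks₂₁ ∧ N.toBlocks₂₂ * Ph = Ph * N.toBlocks₂₂) := by
  have h1 : oplus Pg Ph = (Matrix.fromBlocks Pg 0 0 Ph).submatrix
      ⇑finSumFinEquiv.symm ⇑finSumFinEquiv.symm := rfl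
  rw [h1, Matrix.submatrix_mul_equiv N _ _ finSumFinEquiv.symm _,
    Matrix.submatrix_mul_equiv _ N _ finSumFinEquiv.symm _]
  have hinj : ∀ X Y : Matrix (Fin p ⊕ Fin q) (Fin p ⊕ Fin q) ℝ,
      X.submatrix ⇑finSumFinEquiv.symm ⇑finSumFinEquiv.symm =
        Y.submatrix ⇑finSumFinEquiv.symm ⇑finSumFinEquiv.symm ↔ X = Y := by
    intro X Y
    exact (Matrix.reindex finSumFinEquiv finSumFinEquiv).injective.eq_iff
  rw [hinj]
  conv_lhs => rw [← Matrix.fromBlocks_toBlocks N]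
  rw [Matrix.fromBlocks_multiply, Matrix.fromBlocks_multiply]
  simp only [Matrix.mul_zero, Matrix.zero_mul, add_zero, zero_add]
  rw [Matrix.fromBlocks_inj]

lemma mem_bigC_iff {p q : ℕ} (G : Subgroup (Equiv.Perm (Fin p)))
    (H : Subgroup (Equiv.Perm (Fin q))) (M : Matrix (Fin (p + q)) (Fin (p + q)) ℝ) :
    M ∈ commutant {Q | ∃ g ∈ G, ∃ h ∈ H, Q = oplus (permMat g) (permMat h)} ↔
      ((M.submatrix ⇑finSumFinEquiv ⇑finSumFinEquiv).toBlocks₁₁ ∈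
          commutant {Q | ∃ g ∈ G, Q = permMat g} ∧
        (M.submatrix ⇑finSumFinEquiv ⇑finSumFinEquiv).toBlocks₂₂ ∈
          commutant {Q | ∃ h ∈ H, Q = permMat h} ∧
        (M.submatrix ⇑finSumFinEquiv ⇑finSumFinEquiv).toBlocks₁₂ ∈ interSpace G H ∧
        (M.submatrix ⇑finSumFinEquiv ⇑finSumFinEquiv).toBlocks₂₁ ∈ interSpace H G) := by
  set N := M.submatrix ⇑finSumFinEquiv ⇑finSumFinEquiv with hN
  have hM : M = N.submatrix ⇑finSumFinEquiv.symm ⇑finSumFinEquiv.symm := by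
    simp [hN, Matrix.submatrix_submatrix]
  have key : M ∈ commutant {Q | ∃ g ∈ G, ∃ h ∈ H, Q = oplus (permMat g) (permMat h)} ↔
      ∀ g ∈ G, ∀ h ∈ H,
        (N.toBlocks₁₁ * permMat g = permMat g * N.toBlocks₁₁ ∧
         N.toBlocks₁₂ * permMat h = permMat g * N.toBlocks₁₂ ∧
         N.toBlocks₂₁ * permMat g = permMat h * N.toBlocks₂₁ ∧
         N.toBlocks₂₂ * permMat h = permMat h * N.toBlocks₂₂) := by
    constructor
    · intro hMem g hg h hh
      rw [← oplus_comm_iff]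
      rw [← hM]
      exact hMem _ ⟨g, hg, h, hh, rfl⟩
    · intro hC Q hQ
      obtain ⟨g, hg, h, hh, rfl⟩ := hQ
      rw [hM, oplus_comm_iff]
      exact hC g hg h hh
  rw [key]
  constructor
  · intro hC
    refine ⟨?_, ?_, ?_, ?_⟩
    · rintro Q ⟨g, hg, rfl⟩
      exact (hC g hg 1 (one_mem H)).1
    · rintro Q ⟨h, hh, rfl⟩
      exact (hC 1 (one_mem G) h hh).2.2.2
    · intro g hg h hh
      exact ((hC g hg h hh).2.1).symm
    · intro h hh g hg
      exact ((hC g hg h hh).2.2.1).symm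
  · rintro ⟨h11, h22, h12, h21⟩ g hg h hh
    exact ⟨h11 _ ⟨g, hg, rfl⟩, (h12 g hg h hh).symm, (h21 h hh g hg).symm,
      h22 _ ⟨h, hh, rfl⟩⟩

end Aux


/-- `dim E(G⊕H) = dim E(G) + dim E(H) + 2·|O(G)|·|O(H)|`. -/
theorem directSum_commutant_dim {p q : ℕ}
    (G : Subgroup (Equiv.Perm (Fin p))) (H : Subgroup (Equiv.Perm (Fin q))) :
    Module.finrank ℝ
        (commutant {Q | ∃ g ∈ G, ∃ h ∈ H, Q = oplus (permMat g) (permMat h)}) =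
      Module.finrank ℝ (commutant {Q | ∃ g ∈ G, Q = permMat g}) +
      Module.finrank ℝ (commutant {Q | ∃ h ∈ H, Q = permMat h}) +
      2 * {O : Set (Fin p) | ∃ i, O = orbitOf G i}.ncard *
        {O : Set (Fin q) | ∃ j, O = orbitOf H j}.ncard := by
  classical
  let e : ↥(commutant {Q | ∃ g ∈ G, ∃ h ∈ H, Q = oplus (permMat g) (permMat h)}) ≃ₗ[ℝ]
      ↥(commutant {Q | ∃ g ∈ G, Q = permMat g}) ×
      ↥(commutant {Q | ∃ h ∈ H, Q = permMat h}) ×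
      ↥(interSpace G H) × ↥(interSpace H G) :=
    { toFun := fun M =>
        (⟨((M : Matrix (Fin (p + q)) (Fin (p + q)) ℝ).submatrix ⇑finSumFinEquiv
            ⇑finSumFinEquiv).toBlocks₁₁, ((mem_bigC_iff G H M.1).1 M.2).1⟩,
         ⟨((M : Matrix (Fin (p + q)) (Fin (p + q)) ℝ).submatrix ⇑finSumFinEquiv
            ⇑finSumFinEquiv).toBlocks₂₂, ((mem_bigC_iff G H M.1).1 M.2).2.1⟩,
         ⟨((M : Matrix (Fin (p + q)) (Fin (p + q)) ℝ).submatrix ⇑finSumFinEquiv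
            ⇑finSumFinEquiv).toBlocks₁₂, ((mem_bigC_iff G H M.1).1 M.2).2.2.1⟩,
         ⟨((M : Matrix (Fin (p + q)) (Fin (p + q)) ℝ).submatrix ⇑finSumFinEquiv
            ⇑finSumFinEquiv).toBlocks₂₁, ((mem_bigC_iff G H M.1).1 M.2).2.2.2⟩)
      map_add' := fun _ _ => rfl
      map_smul' := fun _ _ => rfl
      invFun := fun x =>
        ⟨(Matrix.fromBlocks x.1.1 x.2.2.1.1 x.2.2.2.1 x.2.1.1).submatrix
            ⇑finSumFinEquiv.symm ⇑finSumFinEquiv.symm, by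
          rw [mem_bigC_iff]
          have hsub : ((Matrix.fromBlocks x.1.1 x.2.2.1.1 x.2.2.2.1 x.2.1.1).submatrix
              ⇑finSumFinEquiv.symm ⇑finSumFinEquiv.symm).submatrix ⇑finSumFinEquiv
              ⇑finSumFinEquiv = Matrix.fromBlocks x.1.1 x.2.2.1.1 x.2.2.2.1 x.2.1.1 := by
            simp [Matrix.submatrix_submatrix]
          rw [hsub]
          simp only [Matrix.toBlocks_fromBlocks₁₁, Matrix.toBlocks_fromBlocks₁₂,
            Matrix.toBlocks_fromBlocks₂₁, Matrix.toBlocks_fromBlocks₂₂]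
          exact ⟨x.1.2, x.2.1.2, x.2.2.1.2, x.2.2.2.2⟩⟩
      left_inv := fun M => by
        apply Subtype.ext
        simp [Matrix.fromBlocks_toBlocks, Matrix.submatrix_submatrix]
      right_inv := fun x => by
        obtain ⟨⟨A, hA⟩, ⟨D, hD⟩, ⟨B, hB⟩, ⟨C, hC⟩⟩ := x
        refine Prod.ext ?_ (Prod.ext ?_ (Prod.ext ?_ ?_)) <;>
          · apply Subtype.ext
            simp [Matrix.submatrix_submatrix] }
  rw [e.finrank_eq, Module.finrank_prod, Module.finrank_prod, Module.finrank_prod,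
    finrank_interSpace, finrank_interSpace, orbit_set_eq, orbit_set_eq]
  ring
end
end

section
/- Let G be a finite subgroup of the symmetric group on Fin p and H a finite subgroup of the symmetric group on Fin q. Let E(G⊗H) = {M ∈ ℝ^{pq×pq} : M (P_g ⊗ P_h) = (P_g ⊗ P_h) M for all g ∈ G, h ∈ H}. Then dim E(G⊗H) = dim E(G) · dim E(H), where E(G) = {M ∈ ℝ^{p×p} : M P_g = P_g M for all g ∈ G} and E(H) = {M ∈ ℝ^{q×q} : M P_h = P_h M for all h ∈ H}. -/
open Matrix
open scoped Kronecker
open scoped Classical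

noncomputable section

def pMat {α : Type*} [DecidableEq α] (σ : Equiv.Perm α) : Matrix α α ℝ :=
  Matrix.of fun i j => if i = σ j then (1 : ℝ) else 0

lemma pMat_comm_iff {α : Type*} [Fintype α] [DecidableEq α]
    (M : Matrix α α ℝ) (σ : Equiv.Perm α) :
    M * pMat σ = pMat σ * M ↔ ∀ i j, M (σ i) (σ j) = M i j := by
  have h1 : ∀ i j, (M * pMat σ) i j = M i (σ j) := by
    intro i j
    simp [Matrix.mul_apply, pMat, mul_ite]
  have h2 : ∀ i j, (pMat σ * M) i j = M (σ.symm i) j := by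
    intro i j
    simp only [Matrix.mul_apply, pMat, Matrix.of_apply, ite_mul, one_mul, zero_mul]
    rw [Finset.sum_eq_single (σ.symm i)]
    · simp
    · intro b _ hb
      rw [if_neg]
      intro h; exact hb (by simp [h])
    · simp
  constructor
  · intro h i j
    have := congrFun (congrFun h (σ i)) j
    rw [h1, h2] at this
    simpa using this
  · intro h
    ext i j
    rw [h1, h2]
    have := h (σ.symm i) j
    simpa using this

/-- Generic: commutant determined by a setoid on pairs. -/
def commutantEquivQuot {α : Type*} [Fintype α] [DecidableEq α]
    (S : Set (Matrix α α ℝ)) (s : Setoid (α × α))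
    (hS : ∀ Q ∈ S, ∃ σ : Equiv.Perm α, Q = pMat σ ∧ ∀ i j : α, s.r (i, j) (σ i, σ j))
    (hrel : ∀ x y : α × α, s.r x y →
      ∃ σ : Equiv.Perm α, pMat σ ∈ S ∧ σ x.1 = y.1 ∧ σ x.2 = y.2) :
    (commutant S) ≃ₗ[ℝ] (Quotient s → ℝ) where
  toFun M := Quotient.lift (fun x : α × α => (M : Matrix α α ℝ) x.1 x.2) (by
    intro x y hxy
    obtain ⟨σ, hσS, h1, h2⟩ := hrel x y hxy
    have hc := (pMat_comm_iff (M : Matrix α α ℝ) σ).mp (M.2 (pMat σ) hσS)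
    have := hc x.1 x.2
    rw [h1, h2] at this
    exact this.symm)
  map_add' M N := by
    funext x
    induction x using Quotient.ind
    rfl
  map_smul' c M := by
    funext x
    induction x using Quotient.ind
    rfl
  invFun f := ⟨Matrix.of fun i j => f ⟦(i, j)⟧, by
    intro Q hQ
    obtain ⟨σ, rfl, hσ⟩ := hS Q hQ
    rw [pMat_comm_iff]
    intro i j
    show f ⟦(σ i, σ j)⟧ = f ⟦(i, j)⟧
    exact (congrArg f (Quotient.sound (hσ i j))).symm⟩
  left_inv M := by
    apply Subtype.ext
    ext i j
    rfl
  right_inv f := by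
    funext x
    induction x using Quotient.ind
    rfl

def pairRel {α : Type*} (G : Subgroup (Equiv.Perm α)) : Setoid (α × α) where
  r x y := ∃ g ∈ G, g x.1 = y.1 ∧ g x.2 = y.2
  iseqv := by
    constructor
    · intro x; exact ⟨1, G.one_mem, rfl, rfl⟩
    · rintro x y ⟨g, hg, h1, h2⟩
      exact ⟨g⁻¹, G.inv_mem hg, by simp [← h1], by simp [← h2]⟩
    · rintro x y z ⟨g, hg, h1, h2⟩ ⟨g', hg', h1', h2'⟩
      exact ⟨g' * g, G.mul_mem hg' hg, by simp [h1, h1'], by simp [h2, h2']⟩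

def kronRel {α β : Type*} (G : Subgroup (Equiv.Perm α)) (H : Subgroup (Equiv.Perm β)) :
    Setoid ((α × β) × (α × β)) where
  r x y := ∃ g ∈ G, ∃ h ∈ H, g x.1.1 = y.1.1 ∧ h x.1.2 = y.1.2 ∧
    g x.2.1 = y.2.1 ∧ h x.2.2 = y.2.2
  iseqv := by
    constructor
    · intro x; exact ⟨1, G.one_mem, 1, H.one_mem, rfl, rfl, rfl, rfl⟩
    · rintro x y ⟨g, hg, h, hh, e1, e2, e3, e4⟩
      exact ⟨g⁻¹, G.inv_mem hg, h⁻¹, H.inv_mem hh,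
        by simp [← e1], by simp [← e2], by simp [← e3], by simp [← e4]⟩
    · rintro x y z ⟨g, hg, h, hh, e1, e2, e3, e4⟩ ⟨g', hg', h', hh', f1, f2, f3, f4⟩
      exact ⟨g' * g, G.mul_mem hg' hg, h' * h, H.mul_mem hh' hh,
        by simp [e1, f1], by simp [e2, f2], by simp [e3, f3], by simp [e4, f4]⟩

lemma permMat_eq_pMat {m : ℕ} (g : Equiv.Perm (Fin m)) : permMat g = pMat g := rfl

lemma kron_eq_pMat {p q : ℕ} (g : Equiv.Perm (Fin p)) (h : Equiv.Perm (Fin q)) :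
    permMat g ⊗ₖ permMat h = pMat (Equiv.prodCongr g h) := by
  ext ⟨i, j⟩ ⟨k, l⟩
  simp only [Matrix.kroneckerMap_apply, permMat, pMat, Matrix.of_apply,
    Equiv.prodCongr_apply, Prod.mk.injEq, Prod.map, ite_mul, one_mul, zero_mul]
  by_cases h1 : i = g k <;> by_cases h2 : j = h l <;> simp [h1, h2]

def kronQuotEquiv {α β : Type*} (G : Subgroup (Equiv.Perm α)) (H : Subgroup (Equiv.Perm β)) :
    Quotient (kronRel G H) ≃ Quotient (pairRel G) × Quotient (pairRel H) where
  toFun := Quotient.lift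
    (fun x : (α × β) × (α × β) =>
      ((⟦(x.1.1, x.2.1)⟧ : Quotient (pairRel G)), (⟦(x.1.2, x.2.2)⟧ : Quotient (pairRel H))))
    (by
      rintro x y ⟨g, hg, h, hh, e1, e2, e3, e4⟩
      refine Prod.ext ?_ ?_
      · exact Quotient.sound ⟨g, hg, e1, e3⟩
      · exact Quotient.sound ⟨h, hh, e2, e4⟩)
  invFun ab := Quotient.lift₂
    (fun u : α × α => fun v : β × β =>
      (⟦((u.1, v.1), (u.2, v.2))⟧ : Quotient (kronRel G H)))
    (by
      rintro u v u' v' ⟨g, hg, e1, e2⟩ ⟨h, hh, f1, f2⟩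
      exact Quotient.sound ⟨g, hg, h, hh, e1, f1, e2, f2⟩) ab.1 ab.2
  left_inv := by
    intro x
    induction x using Quotient.ind
    rfl
  right_inv := by
    rintro ⟨a, b⟩
    induction a using Quotient.ind
    induction b using Quotient.ind
    rfl


/-- `dim E(G⊗H) = dim E(G) · dim E(H)`. -/
theorem kronecker_commutant_dim {p q : ℕ}
    (G : Subgroup (Equiv.Perm (Fin p))) (H : Subgroup (Equiv.Perm (Fin q))) :
    Module.finrank ℝ
        (commutant {Q | ∃ g ∈ G, ∃ h ∈ H, Q = permMat g ⊗ₖ permMat h}) =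
      Module.finrank ℝ (commutant {Q | ∃ g ∈ G, Q = permMat g}) *
        Module.finrank ℝ (commutant {Q | ∃ h ∈ H, Q = permMat h}) := by
  have eG : (commutant {Q | ∃ g ∈ G, Q = permMat g}) ≃ₗ[ℝ] (Quotient (pairRel G) → ℝ) := by
    refine commutantEquivQuot _ (pairRel G) ?_ ?_
    · rintro Q ⟨g, hg, rfl⟩
      exact ⟨g, rfl, fun i j => ⟨g, hg, rfl, rfl⟩⟩
    · rintro x y ⟨g, hg, h1, h2⟩
      exact ⟨g, ⟨g, hg, rfl⟩, h1, h2⟩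
  have eH : (commutant {Q | ∃ h ∈ H, Q = permMat h}) ≃ₗ[ℝ] (Quotient (pairRel H) → ℝ) := by
    refine commutantEquivQuot _ (pairRel H) ?_ ?_
    · rintro Q ⟨g, hg, rfl⟩
      exact ⟨g, rfl, fun i j => ⟨g, hg, rfl, rfl⟩⟩
    · rintro x y ⟨g, hg, h1, h2⟩
      exact ⟨g, ⟨g, hg, rfl⟩, h1, h2⟩
  have eK : (commutant {Q | ∃ g ∈ G, ∃ h ∈ H, Q = permMat g ⊗ₖ permMat h}) ≃ₗ[ℝ]
      (Quotient (kronRel G H) → ℝ) := by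
    refine commutantEquivQuot _ (kronRel G H) ?_ ?_
    · rintro Q ⟨g, hg, h, hh, rfl⟩
      exact ⟨Equiv.prodCongr g h, kron_eq_pMat g h,
        fun i j => ⟨g, hg, h, hh, rfl, rfl, rfl, rfl⟩⟩
    · rintro x y ⟨g, hg, h, hh, e1, e2, e3, e4⟩
      exact ⟨Equiv.prodCongr g h, ⟨g, hg, h, hh, (kron_eq_pMat g h).symm⟩, by
        exact Prod.ext e1 e2, by exact Prod.ext e3 e4⟩
  rw [eG.finrank_eq, eH.finrank_eq, eK.finrank_eq,
    Module.finrank_pi, Module.finrank_pi, Module.finrank_pi,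
    Fintype.card_congr (kronQuotEquiv G H), Fintype.card_prod]
end
end

section
/- Let G be a subgroup of the symmetric group on Fin p and H a subgroup of the symmetric group on Fin q, and let M ∈ ℝ^{pq×pq} satisfy M (P_g ⊗ P_h) = (P_g ⊗ P_h) M for all g ∈ G, h ∈ H. Define the rearranged matrix M̂ ∈ ℝ^{p²×q²} by M̂_{(i′-1)p+i, (j′-1)q+j} = M_{(i-1)q+j, (i′-1)q+j′} for i, i′ ∈ [p] and j, j′ ∈ [q]. Then rank(M̂) ≤ min(dim E(G), dim E(H)), where E(G) = {A ∈ ℝ^{p×p} : A P_g = P_g A for all g ∈ G} and E(H) = {B ∈ ℝ^{q×q} : B P_h = P_h B for all h ∈ H}. -/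
open Matrix
open scoped Kronecker
open scoped Classical

noncomputable section

lemma mul_kron_apply' {p q : ℕ} (g : Equiv.Perm (Fin p)) (h : Equiv.Perm (Fin q))
    (M : Matrix (Fin p × Fin q) (Fin p × Fin q) ℝ) (x y : Fin p × Fin q) :
    (M * (permMat g ⊗ₖ permMat h)) x y = M x (g y.1, h y.2) := by
  rw [Matrix.mul_apply, Fintype.sum_prod_type]
  simp [permMat, Matrix.kroneckerMap_apply, mul_ite, ite_and]

lemma kron_mul_apply' {p q : ℕ} (g : Equiv.Perm (Fin p)) (h : Equiv.Perm (Fin q))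
    (M : Matrix (Fin p × Fin q) (Fin p × Fin q) ℝ) (x y : Fin p × Fin q) :
    ((permMat g ⊗ₖ permMat h) * M) x y = M (g⁻¹ x.1, h⁻¹ x.2) y := by
  rw [Matrix.mul_apply, Fintype.sum_prod_type]
  have : ∀ (a : Fin p) (k : Fin p), (x.1 = g k) = (k = g⁻¹ x.1) := by
    intro a k
    simp [Equiv.Perm.inv_def, Equiv.eq_symm_apply, eq_comm]
  simp only [permMat, Matrix.kroneckerMap_apply, Matrix.of_apply, ite_mul, one_mul, zero_mul,
    mul_ite, mul_one, mul_zero]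
  have h1 : ∀ k : Fin p, (x.1 = g k) ↔ (k = g⁻¹ x.1) := by
    intro k; constructor
    · intro hk; simp [hk]
    · rintro rfl; simp
  have h2 : ∀ l : Fin q, (x.2 = h l) ↔ (l = h⁻¹ x.2) := by
    intro l; constructor
    · intro hl; simp [hl]
    · rintro rfl; simp
  simp only [h1, h2]
  simp

lemma mul_perm_apply' {m : ℕ} (g : Equiv.Perm (Fin m)) (X : Matrix (Fin m) (Fin m) ℝ)
    (i j : Fin m) : (X * permMat g) i j = X i (g j) := by
  rw [Matrix.mul_apply]
  simp [permMat]

lemma perm_mul_apply' {m : ℕ} (g : Equiv.Perm (Fin m)) (X : Matrix (Fin m) (Fin m) ℝ)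
    (i j : Fin m) : (permMat g * X) i j = X (g⁻¹ i) j := by
  rw [Matrix.mul_apply]
  have h1 : ∀ k : Fin m, (i = g k) ↔ (k = g⁻¹ i) := by
    intro k; constructor
    · intro hk; simp [hk]
    · rintro rfl; simp
  simp only [permMat, Matrix.of_apply, ite_mul, one_mul, zero_mul, h1]
  simp

/-- vectorization of a square matrix as a linear map. -/
def vecmap (m : ℕ) : Matrix (Fin m) (Fin m) ℝ →ₗ[ℝ] (Fin m × Fin m → ℝ) where
  toFun X := fun x => X x.1 x.2
  map_add' _ _ := rfl
  map_smul' _ _ := rfl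

lemma vecmap_injective (m : ℕ) : Function.Injective (vecmap m) := by
  intro X Y hXY
  ext i j
  exact congrFun hXY (i, j)

lemma rank_le_of_cols {m n : Type*} [Fintype m] [Fintype n]
    (N : Matrix m n ℝ) (W : Submodule ℝ (m → ℝ)) (h : ∀ j, Nᵀ j ∈ W) :
    N.rank ≤ Module.finrank ℝ W := by
  rw [Matrix.rank]
  have hle : LinearMap.range N.mulVecLin ≤ W := by
    rw [Matrix.range_mulVecLin]
    exact Submodule.span_le.mpr (Set.range_subset_iff.mpr h)
  exact Submodule.finrank_mono hle

/-- If `M` is `(G ⊗ H)`-equivariant then the rearranged matrix `M̂`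
satisfies `rank(M̂) ≤ min(dim E(G), dim E(H))`. -/
theorem rank_rearrange_le {p q : ℕ}
    (G : Subgroup (Equiv.Perm (Fin p))) (H : Subgroup (Equiv.Perm (Fin q)))
    (M : Matrix (Fin p × Fin q) (Fin p × Fin q) ℝ)
    (hM : ∀ g ∈ G, ∀ h ∈ H,
      M * (permMat g ⊗ₖ permMat h) = (permMat g ⊗ₖ permMat h) * M) :
    (rearrange M).rank ≤
      min (Module.finrank ℝ (commutant {Q | ∃ g ∈ G, Q = permMat g}))
        (Module.finrank ℝ (commutant {Q | ∃ h ∈ H, Q = permMat h})) := by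
  -- key entrywise identity
  have key : ∀ g ∈ G, ∀ h ∈ H, ∀ x y : Fin p × Fin q,
      M x (g y.1, h y.2) = M (g⁻¹ x.1, h⁻¹ x.2) y := by
    intro g hg h hh x y
    have := congrFun (congrFun (hM g hg h hh) x) y
    rwa [mul_kron_apply', kron_mul_apply'] at this
  rw [le_min_iff]
  constructor
  · -- bound by dim E(G)
    set W := (commutant {Q | ∃ g ∈ G, Q = permMat g}).map (vecmap p) with hW
    have h1 : (rearrange M).rank ≤ Module.finrank ℝ W := by
      apply rank_le_of_cols
      intro y
      refine ⟨Matrix.of fun i i' => M (i', y.2) (i, y.1), ?_, rfl⟩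
      rintro Q ⟨g, hg, rfl⟩
      ext i i'
      rw [mul_perm_apply', perm_mul_apply']
      have := key g hg 1 H.one_mem (g i', y.2) (g⁻¹ i, y.1)
      simpa using this
    calc (rearrange M).rank ≤ Module.finrank ℝ W := h1
      _ ≤ _ := Submodule.finrank_map_le _ _
  · -- bound by dim E(H)
    set W := (commutant {Q | ∃ h ∈ H, Q = permMat h}).map (vecmap q) with hW
    have h1 : ((rearrange M)ᵀ).rank ≤ Module.finrank ℝ W := by
      apply rank_le_of_cols
      intro x
      refine ⟨Matrix.of fun j j' => M (x.2, j') (x.1, j), ?_, rfl⟩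
      rintro Q ⟨h, hh, rfl⟩
      ext j j'
      rw [mul_perm_apply', perm_mul_apply']
      have := key 1 G.one_mem h hh (x.2, h j') (x.1, h⁻¹ j)
      simpa using this
    calc (rearrange M).rank = ((rearrange M)ᵀ).rank := (Matrix.rank_transpose _).symm
      _ ≤ Module.finrank ℝ W := h1
      _ ≤ _ := Submodule.finrank_map_le _ _
end
end

section
/- Let M ∈ ℝ^{pq×pq}, γ ∈ ℕ, and X_i ∈ ℝ^{p×p}, Y_i ∈ ℝ^{q×q} for i ∈ [γ]. Let M̂ ∈ ℝ^{p²×q²} be the rearrangement of M given by M̂_{(i′-1)p+i, (j′-1)q+j} = M_{(i-1)q+j, (i′-1)q+j′}, and let vec denote column-stacking, i.e. vec(X)_{(i′-1)p+i} = X_{i,i′}. Then ‖M − Σ_{i=1}^γ X_i ⊗ Y_i‖_F = ‖M̂ − Σ_{i=1}^γ vec(X_i) vec(Y_i)ᵀ‖_F, where ‖·‖_F is the Frobenius norm. -/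
open Matrix
open scoped Kronecker
open scoped Classical

noncomputable section

/-- `‖M − Σᵢ Xᵢ ⊗ Yᵢ‖_F = ‖M̂ − Σᵢ vec(Xᵢ) vec(Yᵢ)ᵀ‖_F`. -/
theorem frobenius_rearrange_eq {p q γ : ℕ}
    (M : Matrix (Fin p × Fin q) (Fin p × Fin q) ℝ)
    (X : Fin γ → Matrix (Fin p) (Fin p) ℝ) (Y : Fin γ → Matrix (Fin q) (Fin q) ℝ) :
    frob (M - ∑ i : Fin γ, X i ⊗ₖ Y i) =
      frob (rearrange M - ∑ i : Fin γ, Matrix.vecMulVec (vecCol (X i)) (vecCol (Y i))) := by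
  have h1 : rearrange M - ∑ i : Fin γ, Matrix.vecMulVec (vecCol (X i)) (vecCol (Y i))
      = rearrange (M - ∑ i : Fin γ, X i ⊗ₖ Y i) := by
    ext ⟨i, i'⟩ ⟨j, j'⟩
    simp [rearrange, Matrix.vecMulVec_apply, vecCol, Matrix.sub_apply,
      Matrix.sum_apply, Matrix.kroneckerMap_apply]
  rw [h1]
  set A := M - ∑ i : Fin γ, X i ⊗ₖ Y i
  unfold frob
  congr 1
  rw [← Fintype.sum_prod_type', ← Fintype.sum_prod_type']
  refine Fintype.sum_equiv
    ⟨fun z => ((z.2.1, z.1.1), (z.2.2, z.1.2)),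
     fun z => ((z.1.2, z.2.2), (z.1.1, z.2.1)),
     fun z => rfl, fun z => rfl⟩
    _ _ fun z => ?_
  rfl
end
end
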